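/- A play ρ⁰ ∈ Plays_X(x₀) is the outcome of a subgame perfect equilibrium in the initialized extended game (X, x₀) if and only if ρ⁰ is λ*-consistent, i.e., ρ⁰ ∈ Λ*(x₀), where λ* is the fixpoint of the labeling iteration. -/

import Mathlib

/-!
Necessity, by induction on `k`: in an SPE the owner of `v` may deviate to any successor `w`,
after which it gets the cost of an SPE outcome from `w`, a `λᵏ`-consistent play; so its cost at
`v` is at most `λᵏ⁺¹(v)`.

Sufficiency: follow the `λ*`-consistent play `ρ⁰` until someone deviates; when the owner of `u`
deviates to `w`, switch to a play of `Λ*(w)` maximising that owner's cost, which is then at least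
`λ*(u) - 1` because `λ*` is a fixpoint of the update. Such plays exist: `Λ*(w)` is nonempty because
SPE outcomes are `λ*`-consistent and SPEs exist (limits along an ultrafilter of backward-induction
profiles of truncated games), and the supremum of the cost over `Λ*(w)` is attained by compactness.
An induction on the deviator's cost then shows that every deviation is unprofitable.
-/

open scoped Classical

namespace SPE

variable {V : Type*} {P : Type*}

/-- Vertices of the extended game: a base vertex together with the set of players
having already visited their target set. -/
abbrev XV (V P : Type*) := V × Set P

/-- Edges of the extended game induced by base edges `E` and target sets `F`. -/
def XEdge (E : V → V → Prop) (F : P → Set V) (a b : XV V P) : Prop :=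
  E a.1 b.1 ∧ b.2 = a.2 ∪ {i | b.1 ∈ F i}

/-- Plays of the extended game starting at `x`. -/
def IsPlay (E : V → V → Prop) (F : P → Set V) (x : XV V P) (ρ : ℕ → XV V P) : Prop :=
  ρ 0 = x ∧ ∀ k, XEdge E F (ρ k) (ρ (k + 1))

/-- Cost of player `i` along the suffix `ρ_{≥ n}`: the least `k` such that `i` belongs to
the second component of `ρ (n + k)`, and `⊤` if there is no such `k`. -/
noncomputable def costFrom (ρ : ℕ → XV V P) (n : ℕ) (i : P) : ℕ∞ :=
  sInf ((fun k : ℕ => (k : ℕ∞)) '' {k | i ∈ (ρ (n + k)).2})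

/-- Cost of player `i` along the play `ρ` of the extended game. -/
noncomputable def cost (ρ : ℕ → XV V P) (i : P) : ℕ∞ := costFrom ρ 0 i

/-- `λ`-consistency of a play. -/
def Consistent (own : V → P) (lam : XV V P → ℕ∞) (ρ : ℕ → XV V P) : Prop :=
  ∀ n, costFrom ρ n (own (ρ n).1) ≤ lam (ρ n)

/-- The set `Λ(x)` of `λ`-consistent plays from `x`. -/
def Lam (E : V → V → Prop) (F : P → Set V) (own : V → P) (lam : XV V P → ℕ∞)
    (x : XV V P) : Set (ℕ → XV V P) :=
  {ρ | IsPlay E F x ρ ∧ Consistent own lam ρ}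

/-- The initial labeling `λ⁰`. -/
noncomputable def lam0 (own : V → P) : XV V P → ℕ∞ :=
  fun v => if own v.1 ∈ v.2 then 0 else ⊤

/-- The labeling update operator. -/
noncomputable def update (E : V → V → Prop) (F : P → Set V) (own : V → P)
    (lam : XV V P → ℕ∞) (v : XV V P) : ℕ∞ :=
  if own v.1 ∈ v.2 then 0
  else ⨅ w ∈ {w : XV V P | XEdge E F v w},
    (1 + sSup ((fun ρ => cost ρ (own v.1)) '' Lam E F own lam w))

/-- Prepend a finite list in front of an infinite sequence. -/
def listAppendSeq {α : Type*} (h : List α) (ρ : ℕ → α) : ℕ → α :=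
  fun k => if hk : k < h.length then h.get ⟨k, hk⟩ else ρ (k - h.length)

/-- Validity of a strategy profile in the extended game: the prescribed moves follow edges. -/
def StratValid (E : V → V → Prop) (F : P → Set V)
    (σ : List (XV V P) → XV V P → XV V P) : Prop :=
  ∀ h v, XEdge E F v (σ h v)

/-- The outcome of a strategy profile after history `h` from vertex `v`. -/
def outcome (σ : List (XV V P) → XV V P → XV V P) :
    List (XV V P) → XV V P → ℕ → XV V P
  | _, v, 0 => v
  | h, v, n + 1 => outcome σ (h ++ [v]) (σ h v) n

/-- `h·v` is a history of the initialized extended game `(X, x0)`. -/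
def IsHistoryFrom (E : V → V → Prop) (F : P → Set V) (x0 : XV V P)
    (h : List (XV V P)) (v : XV V P) : Prop :=
  (h ++ [v]).head? = some x0 ∧ (h ++ [v]).Chain' (XEdge E F)

/-- Cost of player `i` of the play `h·ρ` (cost in the subgame after `h`). -/
noncomputable def costAfter (h : List (XV V P)) (ρ : ℕ → XV V P) (i : P) : ℕ∞ :=
  sInf ((fun k : ℕ => (k : ℕ∞)) '' {k | i ∈ (listAppendSeq h ρ k).2})

/-- `τ` is a unilateral deviation of player `i` from the profile `σ`. -/
def Deviation (own : V → P) (σ τ : List (XV V P) → XV V P → XV V P) (i : P) : Prop :=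
  ∀ h v, own v.1 ≠ i → τ h v = σ h v

/-- Subgame perfect equilibrium of the initialized extended game. -/
def IsSPE (E : V → V → Prop) (F : P → Set V) (own : V → P) (x0 : XV V P)
    (σ : List (XV V P) → XV V P → XV V P) : Prop :=
  StratValid E F σ ∧
  ∀ h v, IsHistoryFrom E F x0 h v → ∀ (i : P) τ, StratValid E F τ →
    Deviation own σ τ i →
    costAfter h (outcome σ h v) i ≤ costAfter h (outcome τ h v) i

noncomputable def hitTime (p : ℕ → Prop) : ℕ∞ :=
  sInf ((fun k : ℕ => (k : ℕ∞)) '' {k | p k})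

section HitTime

variable {p q : ℕ → Prop}

theorem hitTime_eq_find (h : ∃ k, p k) : hitTime p = Nat.find h :=
  le_antisymm (sInf_le ⟨_, Nat.find_spec h, rfl⟩)
    (le_sInf <| by rintro _ ⟨k, hk, rfl⟩; exact Nat.cast_le.mpr (Nat.find_min' h hk))

theorem hitTime_eq_top_iff : hitTime p = ⊤ ↔ ∀ k, ¬ p k := by
  simp [hitTime, sInf_eq_top]

theorem hitTime_le_coe_iff {c : ℕ} : hitTime p ≤ c ↔ ∃ k ≤ c, p k := by
  by_cases h : ∃ k, p k
  · rw [hitTime_eq_find h, Nat.cast_le, Nat.find_le_iff]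
  · simp only [not_exists] at h
    simp [hitTime_eq_top_iff.mpr h, h]

theorem hitTime_eq_coe_iff {m : ℕ} : hitTime p = m ↔ p m ∧ ∀ k < m, ¬ p k := by
  by_cases h : ∃ k, p k
  · rw [hitTime_eq_find h, Nat.cast_inj, Nat.find_eq_iff]
  · simp only [not_exists] at h
    simp [hitTime_eq_top_iff.mpr h, h]

theorem hitTime_le {k : ℕ} (hk : p k) : hitTime p ≤ k :=
  hitTime_le_coe_iff.mpr ⟨k, le_rfl, hk⟩

theorem hitTime_eq_zero (h0 : p 0) : hitTime p = 0 := by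
  simpa using hitTime_le h0

theorem hitTime_mono (h : ∀ c : ℕ, (∃ k ≤ c, q k) → ∃ k ≤ c, p k) : hitTime p ≤ hitTime q := by
  induction hq : hitTime q using ENat.recTopCoe with
  | top => exact le_top
  | coe c => exact hitTime_le_coe_iff.mpr (h c (hitTime_le_coe_iff.mp hq.le))

theorem hitTime_congr_of_le {c : ℕ} (h : ∀ k ≤ c, p k ↔ q k) : hitTime p ≤ c ↔ hitTime q ≤ c := by
  simp only [hitTime_le_coe_iff]
  exact ⟨fun ⟨k, hk, hp⟩ => ⟨k, hk, (h k hk).mp hp⟩, fun ⟨k, hk, hq⟩ => ⟨k, hk, (h k hk).mpr hq⟩⟩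

theorem hitTime_eq_add {n : ℕ} (h : ∀ k < n, ¬ p k) :
    hitTime p = n + hitTime (fun k => p (n + k)) := by
  induction hq : hitTime (fun k => p (n + k)) using ENat.recTopCoe with
  | top =>
    refine hitTime_eq_top_iff.mpr fun k hk => ?_
    rcases lt_or_ge k n with hkn | hkn
    · exact h k hkn hk
    · exact hitTime_eq_top_iff.mp hq (k - n) (by rwa [Nat.add_sub_cancel' hkn])
  | coe m =>
    obtain ⟨hm, hlt⟩ := hitTime_eq_coe_iff.mp hq
    rw [← Nat.cast_add, hitTime_eq_coe_iff]
    refine ⟨hm, fun k hk hpk => ?_⟩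
    rcases lt_or_ge k n with hkn | hkn
    · exact h k hkn hpk
    · exact hlt (k - n) (by omega) (by rwa [Nat.add_sub_cancel' hkn])

theorem hitTime_eq_one_add (h0 : ¬ p 0) : hitTime p = 1 + hitTime (fun k => p (k + 1)) := by
  rw [hitTime_eq_add (n := 1) (by simpa using h0)]
  simp only [Nat.cast_one, Nat.add_comm 1]

end HitTime

section Plays

variable {E : V → V → Prop} {F : P → Set V}

theorem costFrom_eq_hitTime (ρ : ℕ → XV V P) (n : ℕ) (i : P) :
    costFrom ρ n i = hitTime (fun k => i ∈ (ρ (n + k)).2) := rfl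

theorem cost_eq_hitTime (ρ : ℕ → XV V P) (i : P) :
    cost ρ i = hitTime (fun k => i ∈ (ρ k).2) := by
  simp only [cost, costFrom_eq_hitTime, Nat.zero_add]

theorem costFrom_eq_cost (ρ : ℕ → XV V P) (n : ℕ) (i : P) :
    costFrom ρ n i = cost (fun k => ρ (n + k)) i := by
  rw [costFrom_eq_hitTime, cost_eq_hitTime]

theorem cost_eq_zero {ρ : ℕ → XV V P} {i : P} (h : i ∈ (ρ 0).2) : cost ρ i = 0 := by
  rw [cost_eq_hitTime]
  exact hitTime_eq_zero h

theorem cost_eq_one_add {ρ : ℕ → XV V P} {i : P} (h : i ∉ (ρ 0).2) :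
    cost ρ i = 1 + cost (fun k => ρ (k + 1)) i := by
  rw [cost_eq_hitTime, cost_eq_hitTime]
  exact hitTime_eq_one_add h

theorem XEdge.subset {a b : XV V P} (h : XEdge E F a b) : a.2 ⊆ b.2 := by
  rw [h.2]
  exact Set.subset_union_left

theorem isHistoryFrom_nil (x0 : XV V P) : IsHistoryFrom E F x0 [] x0 :=
  ⟨rfl, List.isChain_singleton _⟩

theorem IsHistoryFrom.append {x0 v w : XV V P} {h : List (XV V P)}
    (hh : IsHistoryFrom E F x0 h v) (he : XEdge E F v w) :
    IsHistoryFrom E F x0 (h ++ [v]) w := by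
  refine ⟨by cases h <;> simpa using hh.1, ?_⟩
  rw [List.Chain', List.isChain_append]
  exact ⟨hh.2, List.isChain_singleton _, by simp [he]⟩

theorem IsHistoryFrom.notMem {x0 v : XV V P} {h : List (XV V P)} {i : P}
    (hh : IsHistoryFrom E F x0 h v) (hi : i ∉ v.2) : ∀ x ∈ h, i ∉ x.2 := by
  have hsub : List.Pairwise (fun a b : XV V P => a.2 ⊆ b.2) (h ++ [v]) :=
    List.isChain_iff_pairwise.mp (hh.2.imp fun _ _ hab => hab.subset)
  intro x hx hix
  exact hi (List.pairwise_append.mp hsub |>.2.2 x hx v (by simp) hix)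

end Plays

section Outcomes

variable {E : V → V → Prop} {F : P → Set V} {own : V → P}
  {σ τ : List (XV V P) → XV V P → XV V P}

theorem outcome_succ (h : List (XV V P)) (v : XV V P) (n : ℕ) :
    outcome σ h v (n + 1) = outcome σ (h ++ [v]) (σ h v) n := rfl

theorem cost_outcome_of_notMem {h : List (XV V P)} {v : XV V P} {i : P} (hi : i ∉ v.2) :
    cost (outcome σ h v) i = 1 + cost (outcome σ (h ++ [v]) (σ h v)) i :=
  cost_eq_one_add hi

theorem StratValid.isPlay (hσ : StratValid E F σ) (h : List (XV V P)) (v : XV V P) :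
    IsPlay E F v (outcome σ h v) := by
  refine ⟨rfl, fun n => ?_⟩
  induction n generalizing h v with
  | zero => exact hσ h v
  | succ n ih => exact ih (h ++ [v]) (σ h v)

theorem StratValid.exists_history_outcome (hσ : StratValid E F σ) {x0 v : XV V P}
    {h : List (XV V P)} (hh : IsHistoryFrom E F x0 h v) (n : ℕ) :
    ∃ h', IsHistoryFrom E F x0 h' (outcome σ h v n) ∧
      ∀ m, outcome σ h v (n + m) = outcome σ h' (outcome σ h v n) m := by
  induction n generalizing h v with
  | zero => exact ⟨h, hh, fun m => by rw [Nat.zero_add]; rfl⟩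
  | succ n ih =>
    obtain ⟨h', hh', hshift⟩ := ih (hh.append (hσ h v))
    exact ⟨h', hh', fun m => by rw [Nat.add_right_comm]; exact hshift m⟩

theorem StratValid.consistent_outcome (hσ : StratValid E F σ) {x0 : XV V P} {L : XV V P → ℕ∞}
    (hL : ∀ h v, IsHistoryFrom E F x0 h v → cost (outcome σ h v) (own v.1) ≤ L v)
    {h : List (XV V P)} {v : XV V P} (hh : IsHistoryFrom E F x0 h v) :
    Consistent own L (outcome σ h v) := by
  intro n
  obtain ⟨h', hh', hshift⟩ := hσ.exists_history_outcome hh n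
  rw [costFrom_eq_cost, funext hshift]
  exact hL h' _ hh'

theorem outcome_congr_of_length_le {n : ℕ} (hστ : ∀ h v, n ≤ h.length → σ h v = τ h v)
    {h : List (XV V P)} (hn : n ≤ h.length) (v : XV V P) : outcome σ h v = outcome τ h v := by
  funext m
  induction m generalizing h v with
  | zero => rfl
  | succ m ih =>
    rw [outcome_succ, outcome_succ, hστ h v hn]
    exact ih (by simp only [List.length_append, List.length_singleton]; omega) _

def outcomeHistories (σ : List (XV V P) → XV V P → XV V P) :
    List (XV V P) → XV V P → ℕ → List (List (XV V P) × XV V P)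
  | _, _, 0 => []
  | h, v, n + 1 => (h, v) :: outcomeHistories σ (h ++ [v]) (σ h v) n

theorem outcome_eq_of_forall_outcomeHistories {n : ℕ} {h : List (XV V P)} {v : XV V P}
    (hστ : ∀ p ∈ outcomeHistories σ h v n, τ p.1 p.2 = σ p.1 p.2) :
    ∀ j ≤ n, outcome τ h v j = outcome σ h v j := by
  induction n generalizing h v with
  | zero => intro j hj; obtain rfl := Nat.le_zero.mp hj; rfl
  | succ n ih =>
    simp only [outcomeHistories, List.mem_cons, forall_eq_or_imp] at hστ
    rintro (_ | j) hj
    · rfl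
    · rw [outcome_succ, outcome_succ, hστ.1]
      exact ih hστ.2 j (by omega)

end Outcomes

section CostAfter

variable {E : V → V → Prop} {F : P → Set V} {own : V → P}

theorem listAppendSeq_length_add {α : Type*} (h : List α) (ρ : ℕ → α) (k : ℕ) :
    listAppendSeq h ρ (h.length + k) = ρ k := by
  simp [listAppendSeq]

theorem listAppendSeq_of_lt {α : Type*} {h : List α} {ρ : ℕ → α} {k : ℕ} (hk : k < h.length) :
    listAppendSeq h ρ k = h[k] :=
  dif_pos hk

theorem costAfter_eq_length_add {h : List (XV V P)} {i : P} (hi : ∀ x ∈ h, i ∉ x.2)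
    (ρ : ℕ → XV V P) : costAfter h ρ i = h.length + cost ρ i := by
  rw [costAfter, ← hitTime, hitTime_eq_add (n := h.length), cost_eq_hitTime]
  · simp only [listAppendSeq_length_add]
  · intro k hk
    rw [listAppendSeq_of_lt hk]
    exact hi _ (List.getElem_mem hk)

theorem costAfter_mono {ρ ρ' : ℕ → XV V P} {i : P} (hc : cost ρ i ≤ cost ρ' i)
    (h : List (XV V P)) : costAfter h ρ i ≤ costAfter h ρ' i := by
  refine hitTime_mono fun c ⟨k, hkc, hk⟩ => ?_
  rcases lt_or_ge k h.length with hkh | hkh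
  · exact ⟨k, hkc, by rwa [listAppendSeq_of_lt hkh] at hk ⊢⟩
  · obtain ⟨j, rfl⟩ := Nat.exists_eq_add_of_le hkh
    rw [listAppendSeq_length_add] at hk
    have hj : cost ρ i ≤ j := hc.trans (by rw [cost_eq_hitTime]; exact hitTime_le hk)
    obtain ⟨j', hj', hij'⟩ := hitTime_le_coe_iff.mp (cost_eq_hitTime ρ i ▸ hj)
    exact ⟨h.length + j', by omega, by rwa [listAppendSeq_length_add]⟩

theorem IsSPE.cost_le {x0 : XV V P} {σ τ : List (XV V P) → XV V P → XV V P}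
    (hσ : IsSPE E F own x0 σ) {h : List (XV V P)} {v : XV V P} (hh : IsHistoryFrom E F x0 h v)
    {i : P} (hi : i ∉ v.2) (hτ : StratValid E F τ) (hdev : Deviation own σ τ i) :
    cost (outcome σ h v) i ≤ cost (outcome τ h v) i := by
  have hspe := hσ.2 h v hh i τ hτ hdev
  rwa [costAfter_eq_length_add (hh.notMem hi), costAfter_eq_length_add (hh.notMem hi),
    ENat.add_le_add_iff_left (ENat.natCast_ne_top _)] at hspe

theorem isSPE_of_cost_le {σ : List (XV V P) → XV V P → XV V P} (hσ : StratValid E F σ)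
    (hopt : ∀ h v i τ, StratValid E F τ → Deviation own σ τ i →
      cost (outcome σ h v) i ≤ cost (outcome τ h v) i)
    (x0 : XV V P) : IsSPE E F own x0 σ :=
  ⟨hσ, fun h v _ i τ hτ hdev => costAfter_mono (hopt h v i τ hτ hdev) h⟩

end CostAfter

section Necessity

variable {E : V → V → Prop} {F : P → Set V} {own : V → P} {x0 : XV V P}
  {σ : List (XV V P) → XV V P → XV V P}

theorem cost_outcome_le_lam0 (h : List (XV V P)) (v : XV V P) :
    cost (outcome σ h v) (own v.1) ≤ lam0 own v := by
  unfold lam0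
  split_ifs with hv
  · exact (cost_eq_zero hv).le
  · exact le_top

theorem IsSPE.cost_outcome_le_update (hσ : IsSPE E F own x0 σ) {L : XV V P → ℕ∞}
    (hL : ∀ h v, IsHistoryFrom E F x0 h v → cost (outcome σ h v) (own v.1) ≤ L v)
    {h : List (XV V P)} {v : XV V P} (hh : IsHistoryFrom E F x0 h v) :
    cost (outcome σ h v) (own v.1) ≤ update E F own L v := by
  unfold update
  split_ifs with hv
  · exact (cost_eq_zero hv).le
  refine le_iInf₂ fun w hw => ?_
  let τ : List (XV V P) → XV V P → XV V P := fun h' v' => if h' = h ∧ v' = v then w else σ h' v'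
  have hτ : StratValid E F τ := fun h' v' => by
    by_cases hc : h' = h ∧ v' = v
    · rw [show τ h' v' = w from if_pos hc, hc.2]; exact hw
    · rw [show τ h' v' = σ h' v' from if_neg hc]; exact hσ.1 h' v'
  have hdev : Deviation own σ τ (own v.1) := fun h' v' hne => if_neg fun hc => hne (by rw [hc.2])
  have htail : outcome τ (h ++ [v]) w = outcome σ (h ++ [v]) w :=
    outcome_congr_of_length_le (n := h.length + 1)
      (fun h' v' hlen => if_neg fun hc => by rw [hc.1] at hlen; omega) (by simp) w
  have hmem : outcome σ (h ++ [v]) w ∈ Lam E F own L w :=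
    ⟨hσ.1.isPlay _ _, hσ.1.consistent_outcome hL (hh.append hw)⟩
  calc cost (outcome σ h v) (own v.1)
      ≤ cost (outcome τ h v) (own v.1) := hσ.cost_le hh hv hτ hdev
    _ = 1 + cost (outcome σ (h ++ [v]) w) (own v.1) := by
        rw [cost_outcome_of_notMem hv, ← htail]; simp [τ]
    _ ≤ 1 + sSup ((fun ρ => cost ρ (own v.1)) '' Lam E F own L w) := by
        gcongr; exact le_sSup ⟨_, hmem, rfl⟩

theorem IsSPE.cost_outcome_le_lam (hσ : IsSPE E F own x0 σ) {lam : ℕ → XV V P → ℕ∞}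
    (h0 : lam 0 = lam0 own)
    (hstep : ∀ k w, lam (k + 1) w = lam k w ∨ lam (k + 1) w = update E F own (lam k) w)
    (k : ℕ) {h : List (XV V P)} {v : XV V P} (hh : IsHistoryFrom E F x0 h v) :
    cost (outcome σ h v) (own v.1) ≤ lam k v := by
  induction k generalizing h v with
  | zero => rw [h0]; exact cost_outcome_le_lam0 h v
  | succ k ih =>
    rcases hstep k v with hkeep | hupd
    · rw [hkeep]; exact ih hh
    · rw [hupd]; exact hσ.cost_outcome_le_update (fun _ _ => ih) hh

theorem IsSPE.consistent_outcome (hσ : IsSPE E F own x0 σ) {lam : ℕ → XV V P → ℕ∞}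
    (h0 : lam 0 = lam0 own)
    (hstep : ∀ k w, lam (k + 1) w = lam k w ∨ lam (k + 1) w = update E F own (lam k) w)
    (k : ℕ) {h : List (XV V P)} {v : XV V P} (hh : IsHistoryFrom E F x0 h v) :
    Consistent own (lam k) (outcome σ h v) :=
  hσ.1.consistent_outcome (fun _ _ => hσ.cost_outcome_le_lam h0 hstep k) hh

end Necessity

section Punishment

variable {E : V → V → Prop} {F : P → Set V} {own : V → P} {μ : XV V P → ℕ∞}
  {σ : List (XV V P) → XV V P → XV V P}

/-- Induction on the deviator's cost: where `τ` leaves `σ`, the deviator is the owner of `v`,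
gets at most `μ v` by staying and at least `μ v` after deviating. -/
theorem cost_outcome_le_of_punishing
    (hhead : ∀ h v, cost (outcome σ h v) (own v.1) ≤ μ v)
    (hpun : ∀ h v w, XEdge E F v w → w ≠ σ h v →
      μ v ≤ 1 + cost (outcome σ (h ++ [v]) w) (own v.1))
    {τ : List (XV V P) → XV V P → XV V P} {i : P} (hτ : StratValid E F τ)
    (hdev : Deviation own σ τ i) (h : List (XV V P)) (v : XV V P) :
    cost (outcome σ h v) i ≤ cost (outcome τ h v) i := by
  suffices key : ∀ (d : ℕ) h v, cost (outcome τ h v) i ≤ d → cost (outcome σ h v) i ≤ d by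
    induction hc : cost (outcome τ h v) i using ENat.recTopCoe with
    | top => exact le_top
    | coe d => exact key d h v hc.le
  intro d
  induction d with
  | zero =>
    intro h v hd
    obtain ⟨k, hk, hik⟩ := hitTime_le_coe_iff.mp (cost_eq_hitTime _ i ▸ hd)
    obtain rfl := Nat.le_zero.mp hk
    rw [Nat.cast_zero]
    exact (cost_eq_zero (ρ := outcome σ h v) hik).le
  | succ d ih =>
    intro h v hd
    by_cases hiv : i ∈ v.2
    · rw [cost_eq_zero hiv]; exact zero_le
    set w := τ h v
    have hw : cost (outcome σ (h ++ [v]) w) i ≤ d := by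
      refine ih _ _ ?_
      rw [cost_outcome_of_notMem hiv, Nat.cast_succ, add_comm _ 1] at hd
      exact (ENat.add_le_add_iff_left ENat.one_ne_top).mp hd
    have hstep : cost (outcome σ h v) i ≤ 1 + cost (outcome σ (h ++ [v]) w) i := by
      by_cases hwσ : w = σ h v
      · rw [cost_outcome_of_notMem hiv, hwσ]
      · have hown : own v.1 = i := by_contra fun hne => hwσ (hdev h v hne)
        subst hown
        exact (hhead h v).trans (hpun h v w (hτ h v) hwσ)
    calc cost (outcome σ h v) i ≤ 1 + cost (outcome σ (h ++ [v]) w) i := hstep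
      _ ≤ 1 + d := by gcongr
      _ = (d + 1 : ℕ) := by push_cast; ring

end Punishment

section PunishingProfile

variable {E : V → V → Prop} {F : P → Set V} {own : V → P} {μ : XV V P → ℕ∞}
  (ρ0 : ℕ → XV V P) (pun : XV V P → XV V P → ℕ → XV V P)

/-- A state `(π, n)` records the current reference play `π` and the index `n` of the vertex it
expects next; a vertex other than `π n` is a deviation from `π (n - 1)` and switches to the
punishment play. (Only the very first vertex can meet `n = 0`, where `π (n - 1) = π 0`.) -/
noncomputable def followStep (s : (ℕ → XV V P) × ℕ) (w : XV V P) : (ℕ → XV V P) × ℕ :=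
  if w = s.1 s.2 then (s.1, s.2 + 1) else (pun (s.1 (s.2 - 1)) w, 1)

noncomputable def refState (l : List (XV V P)) : (ℕ → XV V P) × ℕ :=
  l.foldl (followStep pun) (ρ0, 0)

noncomputable def punishingProfile (h : List (XV V P)) (v : XV V P) : XV V P :=
  (refState ρ0 pun (h ++ [v])).1 (refState ρ0 pun (h ++ [v])).2

variable {ρ0 pun}

theorem refState_append_singleton (l : List (XV V P)) (w : XV V P) :
    refState ρ0 pun (l ++ [w]) = followStep pun (refState ρ0 pun l) w := by
  simp [refState, List.foldl_append]

theorem refState_play_induction {Q : (ℕ → XV V P) → Prop} (h0 : Q ρ0) (hpun : ∀ u w, Q (pun u w))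
    (l : List (XV V P)) : Q (refState ρ0 pun l).1 := by
  induction l using List.reverseRecOn with
  | nil => exact h0
  | append_singleton l w ih =>
    rw [refState_append_singleton, followStep]
    split_ifs
    exacts [ih, hpun _ _]

theorem refState_current (hpun0 : ∀ u w, pun u w 0 = w) (l : List (XV V P)) (w : XV V P) :
    1 ≤ (refState ρ0 pun (l ++ [w])).2 ∧
      (refState ρ0 pun (l ++ [w])).1 ((refState ρ0 pun (l ++ [w])).2 - 1) = w := by
  rw [refState_append_singleton, followStep]
  split_ifs with hw
  · exact ⟨by simp, hw.symm⟩
  · exact ⟨le_rfl, hpun0 _ _⟩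

theorem outcome_punishingProfile (hpun0 : ∀ u w, pun u w 0 = w)
    (h : List (XV V P)) (v : XV V P) (m : ℕ) :
    outcome (punishingProfile ρ0 pun) h v m =
      (refState ρ0 pun (h ++ [v])).1 ((refState ρ0 pun (h ++ [v])).2 - 1 + m) := by
  induction m generalizing h v with
  | zero => exact (refState_current hpun0 h v).2.symm
  | succ m ih =>
    have hnext : refState ρ0 pun (h ++ [v] ++ [punishingProfile ρ0 pun h v]) =
        ((refState ρ0 pun (h ++ [v])).1, (refState ρ0 pun (h ++ [v])).2 + 1) := by
      rw [refState_append_singleton, followStep]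
      exact if_pos rfl
    have hpos := (refState_current (ρ0 := ρ0) hpun0 h v).1
    rw [outcome_succ, ih, hnext]
    exact congrArg _ (by omega)

theorem outcome_punishingProfile_of_ne (hpun0 : ∀ u w, pun u w 0 = w)
    {h : List (XV V P)} {v w : XV V P} (hw : w ≠ punishingProfile ρ0 pun h v) :
    outcome (punishingProfile ρ0 pun) (h ++ [v]) w = pun v w := by
  have hw' : w ≠ (refState ρ0 pun (h ++ [v])).1 (refState ρ0 pun (h ++ [v])).2 := hw
  funext m
  rw [outcome_punishingProfile hpun0, refState_append_singleton, followStep, if_neg hw',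
    (refState_current hpun0 h v).2, Nat.sub_self, Nat.zero_add]

theorem outcome_punishingProfile_nil (hρ0 : ρ0 0 = x0) (hpun0 : ∀ u w, pun u w 0 = w) :
    outcome (punishingProfile ρ0 pun) [] x0 = ρ0 := by
  funext m
  rw [outcome_punishingProfile hpun0]
  simp [refState, followStep, hρ0]

theorem isSPE_punishingProfile {x0 : XV V P} (hρ0 : ρ0 ∈ Lam E F own μ x0)
    (hpun : ∀ u w, pun u w ∈ Lam E F own μ w)
    (hpunish : ∀ u w, XEdge E F u w → μ u ≤ 1 + cost (pun u w) (own u.1)) (x : XV V P) :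
    IsSPE E F own x (punishingProfile ρ0 pun) := by
  have hpun0 : ∀ u w, pun u w 0 = w := fun u w => (hpun u w).1.1
  have hplay : ∀ l, (refState ρ0 pun l).1 ∈ ⋃ x, Lam E F own μ x :=
    refState_play_induction (Set.mem_iUnion_of_mem _ hρ0)
      fun u w => Set.mem_iUnion_of_mem _ (hpun u w)
  have hvalid : StratValid E F (punishingProfile ρ0 pun) := fun h v => by
    obtain ⟨x, hx⟩ := Set.mem_iUnion.mp (hplay (h ++ [v]))
    obtain ⟨hpos, hcur⟩ := refState_current (ρ0 := ρ0) hpun0 h v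
    have hedge := hx.1.2 ((refState ρ0 pun (h ++ [v])).2 - 1)
    rwa [Nat.sub_add_cancel hpos, hcur] at hedge
  have hhead : ∀ h v, cost (outcome (punishingProfile ρ0 pun) h v) (own v.1) ≤ μ v := by
    intro h v
    obtain ⟨x, hx⟩ := Set.mem_iUnion.mp (hplay (h ++ [v]))
    have hcons := hx.2 ((refState ρ0 pun (h ++ [v])).2 - 1)
    rw [(refState_current hpun0 h v).2, costFrom_eq_cost] at hcons
    rwa [funext (outcome_punishingProfile hpun0 h v)]
  have hdeviate : ∀ h v w, XEdge E F v w → w ≠ punishingProfile ρ0 pun h v →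
      μ v ≤ 1 + cost (outcome (punishingProfile ρ0 pun) (h ++ [v]) w) (own v.1) := by
    intro h v w hvw hw
    rw [outcome_punishingProfile_of_ne hpun0 hw]
    exact hpunish v w hvw
  exact isSPE_of_cost_le hvalid
    (fun h v _ _ hτ hdev => cost_outcome_le_of_punishing hhead hdeviate hτ hdev h v) x

end PunishingProfile

section HyperLimit

variable {ι α : Type*} [Finite α]

theorem exists_eventually_eq (U : Ultrafilter ℕ) (f : ℕ → α) : ∃ a, ∀ᶠ N in U, f N = a := by
  obtain ⟨a, ha⟩ := (U.map f).eq_pure_of_finite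
  have hmem : {a} ∈ U.map f := by rw [ha]; exact Ultrafilter.mem_pure.mpr rfl
  exact ⟨a, Ultrafilter.mem_map.mp hmem⟩

noncomputable def hyperLimit (f : ℕ → ι → α) (i : ι) : α :=
  (exists_eventually_eq (Filter.hyperfilter ℕ) (f · i)).choose

theorem exists_ge_forall_eq_hyperLimit (f : ℕ → ι → α) {s : Set ι} (hs : s.Finite) (K : ℕ) :
    ∃ N, K ≤ N ∧ ∀ i ∈ s, f N i = hyperLimit f i := by
  have hlim : ∀ᶠ N in Filter.hyperfilter ℕ, ∀ i ∈ s, f N i = hyperLimit f i :=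
    (Filter.eventually_all_finite hs).mpr fun i _ =>
      (exists_eventually_eq (Filter.hyperfilter ℕ) (f · i)).choose_spec
  have hK : ∀ᶠ N in Filter.hyperfilter ℕ, K ≤ N :=
    Filter.hyperfilter_le_cofinite <| by
      rw [Nat.cofinite_eq_atTop]
      exact Filter.eventually_ge_atTop K
  exact (hK.and hlim).exists

end HyperLimit

section Sufficiency

variable [Finite V] [Finite P] {E : V → V → Prop} {F : P → Set V} {own : V → P}
  {μ : XV V P → ℕ∞} {w : XV V P} {i : P}

/-- Compactness: a limit of plays of `Λ(w)` whose costs are unbounded stays in `Λ(w)` (the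
conditions defining it only involve finite prefixes) and never reaches the target. -/
theorem exists_mem_lam_cost_eq_top (hρs : ∀ c : ℕ, ∃ ρ ∈ Lam E F own μ w, (c : ℕ∞) < cost ρ i) :
    ∃ ρ ∈ Lam E F own μ w, cost ρ i = ⊤ := by
  choose ρs hρs hcost using hρs
  have hagree : ∀ m K, ∃ c, K ≤ c ∧ ∀ n ≤ m, ρs c n = hyperLimit ρs n := fun m K => by
    obtain ⟨c, hc, h⟩ := exists_ge_forall_eq_hyperLimit ρs (Set.finite_Iic m) K
    exact ⟨c, hc, fun n hn => h n hn⟩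
  refine ⟨hyperLimit ρs, ⟨⟨?_, fun n => ?_⟩, fun n => ?_⟩, ?_⟩
  · obtain ⟨c, -, hc⟩ := hagree 0 0
    rw [← hc 0 le_rfl]
    exact (hρs c).1.1
  · obtain ⟨c, -, hc⟩ := hagree (n + 1) 0
    rw [← hc n (by omega), ← hc (n + 1) le_rfl]
    exact (hρs c).1.2 n
  · induction hμ : μ (hyperLimit ρs n) using ENat.recTopCoe with
    | top => exact le_top
    | coe b =>
      obtain ⟨c, -, hc⟩ := hagree (n + b) 0
      have hcons := (hρs c).2 n
      rw [hc n (by omega), hμ, costFrom_eq_hitTime] at hcons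
      rw [costFrom_eq_hitTime]
      exact (hitTime_congr_of_le fun k hk => by rw [hc (n + k) (by omega)]).mp hcons
  · rw [cost_eq_hitTime, hitTime_eq_top_iff]
    intro k hk
    obtain ⟨c, hkc, hc⟩ := hagree k k
    have hle : cost (ρs c) i ≤ k := by
      rw [cost_eq_hitTime]
      exact hitTime_le (by rwa [hc k le_rfl])
    exact absurd (hle.trans (Nat.cast_le.mpr hkc)) (not_le.mpr (hcost c))

theorem exists_mem_lam_sSup_le_cost (hne : (Lam E F own μ w).Nonempty) (i : P) :
    ∃ ρ ∈ Lam E F own μ w, sSup ((fun ρ => cost ρ i) '' Lam E F own μ w) ≤ cost ρ i := by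
  by_cases hS : sSup ((fun ρ => cost ρ i) '' Lam E F own μ w) = ⊤
  · obtain ⟨ρ, hρ, htop⟩ := exists_mem_lam_cost_eq_top fun c => by
      obtain ⟨_, ⟨ρ, hρ, rfl⟩, hlt⟩ := lt_sSup_iff.mp (hS ▸ ENat.natCast_lt_top c)
      exact ⟨ρ, hρ, hlt⟩
    exact ⟨ρ, hρ, htop ▸ le_top⟩
  · have : Nonempty ((fun ρ => cost ρ i) '' Lam E F own μ w) := (hne.image _).to_subtype
    obtain ⟨ρ, hρ, hρS⟩ := ENat.sSup_mem_of_nonempty_of_lt_top (lt_top_iff_ne_top.mpr hS)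
    exact ⟨ρ, hρ, hρS.ge⟩

theorem exists_punishment (hfix : ∀ w, update E F own μ w = μ w)
    (hne : ∀ w, (Lam E F own μ w).Nonempty) (u w : XV V P) :
    ∃ ρ ∈ Lam E F own μ w, XEdge E F u w → μ u ≤ 1 + cost ρ (own u.1) := by
  obtain ⟨ρ, hρ, hS⟩ := exists_mem_lam_sSup_le_cost (hne w) (own u.1)
  refine ⟨ρ, hρ, fun huw => ?_⟩
  rw [← hfix u, update]
  split_ifs
  · exact zero_le
  · exact (iInf₂_le w huw).trans (by gcongr)

theorem exists_isSPE_outcome_eq (hfix : ∀ w, update E F own μ w = μ w)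
    (hne : ∀ w, (Lam E F own μ w).Nonempty) {x0 : XV V P} {ρ0 : ℕ → XV V P}
    (hρ0 : ρ0 ∈ Lam E F own μ x0) :
    ∃ σ, IsSPE E F own x0 σ ∧ ∀ n, outcome σ [] x0 n = ρ0 n := by
  choose pun hpun hpunish using exists_punishment hfix hne
  refine ⟨punishingProfile ρ0 pun, isSPE_punishingProfile hρ0 hpun hpunish x0, fun n => ?_⟩
  rw [outcome_punishingProfile_nil hρ0.1.1 fun u w => (hpun u w).1.1]

end Sufficiency

section FiniteHorizon

variable {E : V → V → Prop} {F : P → Set V} {own : V → P}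

noncomputable def truncCost (b : ℕ) (ρ : ℕ → XV V P) (i : P) : ℕ∞ :=
  hitTime (fun k => k < b ∧ i ∈ (ρ k).2)

theorem truncCost_zero (ρ : ℕ → XV V P) (i : P) : truncCost 0 ρ i = ⊤ :=
  hitTime_eq_top_iff.mpr fun _ hk => Nat.not_lt_zero _ hk.1

theorem truncCost_succ_of_mem {b : ℕ} {ρ : ℕ → XV V P} {i : P} (h : i ∈ (ρ 0).2) :
    truncCost (b + 1) ρ i = 0 :=
  hitTime_eq_zero ⟨Nat.succ_pos b, h⟩

theorem truncCost_succ_of_notMem {b : ℕ} {ρ : ℕ → XV V P} {i : P} (h : i ∉ (ρ 0).2) :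
    truncCost (b + 1) ρ i = 1 + truncCost b (fun k => ρ (k + 1)) i := by
  rw [truncCost, hitTime_eq_one_add fun h0 => h h0.2]
  simp only [truncCost, Nat.add_lt_add_iff_right]

theorem nonempty_setOf_xedge (htot : ∀ u, ∃ w, E u w) (v : XV V P) : {w | XEdge E F v w}.Nonempty :=
  let ⟨u, hu⟩ := htot v.1
  ⟨(u, v.2 ∪ {i | u ∈ F i}), hu, rfl⟩

variable (E F own) (htot : ∀ u, ∃ w, E u w)

/-- Backward-induction values of the game truncated after `b` steps. -/
noncomputable def biValue : ℕ → XV V P → P → ℕ∞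
  | 0, _, _ => ⊤
  | b + 1, v, i => if i ∈ v.2 then 0 else
      1 + biValue b (Function.argminOn (fun w => biValue b w (own v.1)) {w | XEdge E F v w}
        (nonempty_setOf_xedge htot v)) i

noncomputable def biMove (b : ℕ) (v : XV V P) : XV V P :=
  Function.argminOn (fun w => biValue E F own htot b w (own v.1)) {w | XEdge E F v w}
    (nonempty_setOf_xedge htot v)

noncomputable def horizonProfile (N : ℕ) (h : List (XV V P)) (v : XV V P) : XV V P :=
  biMove E F own htot (N - h.length - 1) v

variable {E F own htot}

theorem biValue_succ (b : ℕ) (v : XV V P) (i : P) :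
    biValue E F own htot (b + 1) v i =
      if i ∈ v.2 then 0 else 1 + biValue E F own htot b (biMove E F own htot b v) i := rfl

theorem horizonProfile_valid (N : ℕ) : StratValid E F (horizonProfile E F own htot N) :=
  fun h v => Function.argminOn_mem (fun w => biValue E F own htot (N - h.length - 1) w (own v.1))
    {w | XEdge E F v w} (nonempty_setOf_xedge htot v)

theorem truncCost_outcome_horizonProfile (N : ℕ) (i : P) :
    ∀ b h v, N - h.length = b →
      truncCost b (outcome (horizonProfile E F own htot N) h v) i = biValue E F own htot b v i := by
  intro b
  induction b with
  | zero => intro h v _; exact truncCost_zero _ i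
  | succ b ih =>
    intro h v hb
    have hlen : N - (h ++ [v]).length = b := by
      simp only [List.length_append, List.length_singleton]; omega
    rw [biValue_succ]
    split_ifs with hi
    · exact truncCost_succ_of_mem hi
    · rw [truncCost_succ_of_notMem hi]
      have hmove : horizonProfile E F own htot N h v = biMove E F own htot b v := by
        rw [horizonProfile, hb]; rfl
      exact congrArg (1 + ·) (hmove ▸ ih (h ++ [v]) _ hlen)

theorem biValue_le_truncCost_outcome {N : ℕ} {i : P} {τ : List (XV V P) → XV V P → XV V P}
    (hτ : StratValid E F τ) (hdev : Deviation own (horizonProfile E F own htot N) τ i) :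
    ∀ b h v, N - h.length = b → biValue E F own htot b v i ≤ truncCost b (outcome τ h v) i := by
  intro b
  induction b with
  | zero => intro h v _; rw [truncCost_zero]; exact le_top
  | succ b ih =>
    intro h v hb
    have hlen : N - (h ++ [v]).length = b := by
      simp only [List.length_append, List.length_singleton]; omega
    rw [biValue_succ]
    split_ifs with hi
    · exact zero_le
    rw [truncCost_succ_of_notMem hi]
    gcongr
    refine le_trans ?_ (ih (h ++ [v]) (τ h v) hlen)
    by_cases hown : own v.1 = i
    · subst hown
      exact Function.argminOn_le (fun w => biValue E F own htot b w (own v.1)) _ (hτ h v)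
    · rw [hdev h v hown, horizonProfile, hb]
      rfl

theorem truncCost_outcome_horizonProfile_le (N : ℕ) {i : P} {τ : List (XV V P) → XV V P → XV V P}
    (hτ : StratValid E F τ) (hdev : Deviation own (horizonProfile E F own htot N) τ i)
    (h : List (XV V P)) (v : XV V P) :
    truncCost (N - h.length) (outcome (horizonProfile E F own htot N) h v) i ≤
      truncCost (N - h.length) (outcome τ h v) i := by
  rw [truncCost_outcome_horizonProfile N i _ h v rfl]
  exact biValue_le_truncCost_outcome hτ hdev _ h v rfl

end FiniteHorizon

section Existence

variable [Finite V] [Finite P] {E : V → V → Prop} {F : P → Set V} {own : V → P}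
  {htot : ∀ u, ∃ w, E u w}

variable (E F own htot) in
noncomputable def limitProfile (h : List (XV V P)) (v : XV V P) : XV V P :=
  hyperLimit (fun N (p : List (XV V P) × XV V P) => horizonProfile E F own htot N p.1 p.2) (h, v)

theorem exists_horizonProfile_eq_limitProfile {s : Set (List (XV V P) × XV V P)} (hs : s.Finite)
    (K : ℕ) : ∃ N, K ≤ N ∧ ∀ p ∈ s,
      horizonProfile E F own htot N p.1 p.2 = limitProfile E F own htot p.1 p.2 :=
  exists_ge_forall_eq_hyperLimit _ hs K

theorem limitProfile_valid : StratValid E F (limitProfile E F own htot) := fun h v => by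
  obtain ⟨N, -, hN⟩ := exists_horizonProfile_eq_limitProfile (htot := htot)
    (Set.finite_singleton (h, v)) 0
  rw [← hN (h, v) rfl]
  exact horizonProfile_valid N h v

/-- A profitable deviation reaching the target within `d` steps would already be profitable in
a truncated game whose backward-induction profile agrees with the limit along both plays. -/
theorem cost_outcome_limitProfile_le {i : P} {τ : List (XV V P) → XV V P → XV V P}
    (hτ : StratValid E F τ) (hdev : Deviation own (limitProfile E F own htot) τ i)
    (h : List (XV V P)) (v : XV V P) :
    cost (outcome (limitProfile E F own htot) h v) i ≤ cost (outcome τ h v) i := by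
  set σ := limitProfile E F own htot
  rw [cost_eq_hitTime, cost_eq_hitTime]
  refine hitTime_mono fun d ⟨k, hkd, hk⟩ => ?_
  by_contra hmiss
  obtain ⟨N, hN, hagree⟩ := exists_horizonProfile_eq_limitProfile (htot := htot)
    (List.finite_toSet (outcomeHistories σ h v d ++ outcomeHistories τ h v d)) (h.length + d + 1)
  set σN := horizonProfile E F own htot N
  let τN : List (XV V P) → XV V P → XV V P := fun h' v' =>
    if own v'.1 = i then τ h' v' else σN h' v'
  have hσN : ∀ j ≤ d, outcome σN h v j = outcome σ h v j :=
    outcome_eq_of_forall_outcomeHistories fun p hp => hagree p (List.mem_append_left _ hp)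
  have hτN : ∀ j ≤ d, outcome τN h v j = outcome τ h v j := by
    refine outcome_eq_of_forall_outcomeHistories fun p hp => ?_
    by_cases hown : own p.2.1 = i
    · exact if_pos hown
    · rw [show τN p.1 p.2 = σN p.1 p.2 from if_neg hown, hagree p (List.mem_append_right _ hp)]
      exact (hdev _ _ hown).symm
  have hτNvalid : StratValid E F τN := fun h' v' => by
    by_cases hown : own v'.1 = i
    · rw [show τN h' v' = τ h' v' from if_pos hown]; exact hτ h' v'
    · rw [show τN h' v' = σN h' v' from if_neg hown]; exact horizonProfile_valid N h' v'
  have hle := truncCost_outcome_horizonProfile_le N hτNvalid (fun _ _ hne => if_neg hne) h v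
  have hτk : truncCost (N - h.length) (outcome τN h v) i ≤ k :=
    hitTime_le ⟨by omega, by rwa [hτN k hkd]⟩
  obtain ⟨j, hjk, -, hj⟩ := hitTime_le_coe_iff.mp (hle.trans hτk)
  exact hmiss ⟨j, by omega, by rwa [← hσN j (by omega)]⟩

theorem isSPE_limitProfile (x0 : XV V P) : IsSPE E F own x0 (limitProfile E F own htot) :=
  isSPE_of_cost_le limitProfile_valid
    (fun h v _ _ hτ hdev => cost_outcome_limitProfile_le hτ hdev h v) x0

theorem lam_nonempty (htot : ∀ u, ∃ w, E u w) {lam : ℕ → XV V P → ℕ∞} (h0 : lam 0 = lam0 own)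
    (hstep : ∀ k w, lam (k + 1) w = lam k w ∨ lam (k + 1) w = update E F own (lam k) w)
    (k : ℕ) (w : XV V P) : (Lam E F own (lam k) w).Nonempty :=
  ⟨outcome (limitProfile E F own htot) [] w, limitProfile_valid.isPlay [] w,
    (isSPE_limitProfile w).consistent_outcome h0 hstep k (isHistoryFrom_nil w)⟩

end Existence

theorem stmt10_general {V P : Type*} [Fintype V] [Fintype P]
    (E : V → V → Prop) (F : P → Set V) (own : V → P) (v0 : V)
    (htot : ∀ u : V, ∃ w, E u w)
    (lam : ℕ → XV V P → ℕ∞) (h0 : lam 0 = lam0 own)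
    (hstep : ∀ k w, lam (k + 1) w = lam k w ∨
      lam (k + 1) w = update E F own (lam k) w)
    (kstar : ℕ)
    (hfixeq : ∀ w, update E F own (lam kstar) w = lam kstar w)
    (ρ0 : ℕ → XV V P) (hρ0 : IsPlay E F (v0, {i | v0 ∈ F i}) ρ0) :
    (∃ σ, IsSPE E F own (v0, {i | v0 ∈ F i}) σ ∧
      ∀ n, outcome σ [] (v0, {i | v0 ∈ F i}) n = ρ0 n) ↔
    Consistent own (lam kstar) ρ0 := by
  constructor
  · rintro ⟨σ, hσ, hout⟩
    rw [← funext hout]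
    exact hσ.consistent_outcome h0 hstep kstar (isHistoryFrom_nil _)
  · intro hcons
    exact exists_isSPE_outcome_eq hfixeq (lam_nonempty htot h0 hstep kstar) ⟨hρ0, hcons⟩

/-- characterization: a play `ρ⁰` of the initialized extended game
`(X, x₀)` is the outcome of an SPE if and only if `ρ⁰ ∈ Λ*(x₀)`, where `λ*` is the
fixpoint reached by the labeling iteration started at `λ⁰`. -/
theorem stmt10 {V P : Type*} [Fintype V] [Fintype P]
    (E : V → V → Prop) (F : P → Set V) (own : V → P) (v0 : V)
    (htot : ∀ u : V, ∃ w, E u w)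
    (lam : ℕ → XV V P → ℕ∞) (h0 : lam 0 = lam0 own)
    (hstep : ∀ k w, lam (k + 1) w = lam k w ∨
      lam (k + 1) w = update E F own (lam k) w)
    (kstar : ℕ) (hfixseq : ∀ m, lam (kstar + m) = lam kstar)
    (hfixeq : ∀ w, update E F own (lam kstar) w = lam kstar w)
    (ρ0 : ℕ → XV V P) (hρ0 : IsPlay E F (v0, {i | v0 ∈ F i}) ρ0) :
    (∃ σ, IsSPE E F own (v0, {i | v0 ∈ F i}) σ ∧
      ∀ n, outcome σ [] (v0, {i | v0 ∈ F i}) n = ρ0 n) ↔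
    Consistent own (lam kstar) ρ0 :=
  stmt10_general E F own v0 htot lam h0 hstep kstar hfixeq ρ0 hρ0

end SPE
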